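/- For every Riccati solution X and every admissible pair (u,x) with initial state x₀, the completion-of-squares identity holds: J(u,x) = (1/2)·x₀ᵀ M(0)ᵀ X(0) M(0) x₀ + (λ/2)·∫₀ᵀ ‖u(t) + (1/λ)·B̂(t)ᵀ X(t) M(t) x(t)‖² dt. -/

import Mathlib

open Matrix Set MeasureTheory

noncomputable section

/-- Entrywise continuity on a set for matrix-valued functions of one real variable. -/
def MatContOn {a b : ℕ} (f : ℝ → Matrix (Fin a) (Fin b) ℝ) (s : Set ℝ) : Prop :=
  ∀ i j, ContinuousOn (fun t => f t i j) s

/-- The quadratic cost functional `J(u, x)`, with Euclidean norms written via dot products. -/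
def cost {n m r : ℕ} (lam T : ℝ) (C : ℝ → Matrix (Fin r) (Fin n) ℝ)
    (u : ℝ → Fin m → ℝ) (x : ℝ → Fin n → ℝ) : ℝ :=
  (1 / 2) * ∫ t in (0:ℝ)..T,
    ((C t).mulVec (x t) ⬝ᵥ (C t).mulVec (x t) + lam * (u t ⬝ᵥ u t))

/-- An admissible control/state pair with initial state `x₀`: `u` continuous, `x`
differentiable on `[0, T]` with `M(t) x'(t) = A(t) x(t) + B(t) u(t)` and `x(0) = x₀`. -/
structure Admissible {n m : ℕ} (T : ℝ) (M A : ℝ → Matrix (Fin n) (Fin n) ℝ)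
    (B : ℝ → Matrix (Fin n) (Fin m) ℝ) (x₀ : Fin n → ℝ)
    (u : ℝ → Fin m → ℝ) (x : ℝ → Fin n → ℝ) : Prop where
  u_cont : ∀ i, ContinuousOn (fun t => u t i) (Icc 0 T)
  dyn : ∃ x' : ℝ → Fin n → ℝ,
    (∀ t ∈ Icc (0:ℝ) T, ∀ i, HasDerivWithinAt (fun s => x s i) (x' t i) (Icc (0:ℝ) T) t) ∧
    (∀ t ∈ Icc (0:ℝ) T, (M t).mulVec (x' t) = (A t).mulVec (x t) + (B t).mulVec (u t))
  init : x 0 = x₀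

/-- A solution of the generalized differential Riccati equation: continuous, symmetric,
`t ↦ M(t)ᵀ X(t) M(t)` differentiable on `[0, T]`, terminal value `X(T) = 0`, and the
generalized DRE holds on `[0, T]`. -/
structure RiccatiSol {n m r : ℕ} (T lam : ℝ) (M A : ℝ → Matrix (Fin n) (Fin n) ℝ)
    (B : ℝ → Matrix (Fin n) (Fin m) ℝ) (C : ℝ → Matrix (Fin r) (Fin n) ℝ)
    (X : ℝ → Matrix (Fin n) (Fin n) ℝ) : Prop where
  cont : MatContOn X (Icc 0 T)
  symm : ∀ t ∈ Icc (0:ℝ) T, (X t)ᵀ = X t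
  terminal : X T = 0
  riccati : ∃ Y : ℝ → Matrix (Fin n) (Fin n) ℝ,
    (∀ t ∈ Icc (0:ℝ) T, ∀ i j,
      HasDerivWithinAt (fun s => ((M s)ᵀ * X s * M s) i j) (Y t i j) (Icc (0:ℝ) T) t) ∧
    (∀ t ∈ Icc (0:ℝ) T,
      -(Y t) = (C t)ᵀ * C t + (A t)ᵀ * X t * M t + (M t)ᵀ * X t * A t
        - (1 / lam) • ((M t)ᵀ * X t * B t * (B t)ᵀ * X t * M t))

/-!
Along an admissible trajectory the storage `V(t) = x(t)ᵀ M(t)ᵀ X(t) M(t) x(t)` satisfies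
`V' = λ‖u + λ⁻¹ B̂ᵀ X M x‖² - (‖C x‖² + λ‖u‖²)`: substituting `M x' = A x + B̂ u` and the
Riccati equation for `(Mᵀ X M)'`, the terms in `A` cancel and what is left of the `u`-terms is
the completed square. Integrating over `[0, T]` with `V(T) = 0` gives the identity.
-/

section Continuity

variable {s : Set ℝ}

theorem MatContOn.continuous_subtype {a b : ℕ} {f : ℝ → Matrix (Fin a) (Fin b) ℝ}
    (hf : MatContOn f s) : Continuous fun t : s => f t :=
  continuous_matrix fun i j => continuousOn_iff_continuous_domRestrict.mp (hf i j)

theorem continuous_subtype_of_forall_continuousOn {ι : Type*} {v : ℝ → ι → ℝ}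
    (hv : ∀ i, ContinuousOn (fun t => v t i) s) : Continuous fun t : s => v t :=
  continuous_pi fun i => continuousOn_iff_continuous_domRestrict.mp (hv i)

theorem intervalIntegrable_of_continuous_subtype {f : ℝ → ℝ} {a b : ℝ} (hab : a ≤ b)
    (hf : Continuous fun t : Icc a b => f t) : IntervalIntegrable f volume a b :=
  (continuousOn_iff_continuous_domRestrict.mpr hf).intervalIntegrable_of_Icc hab

end Continuity

section Derivative

variable {ι κ : Type*} {s : Set ℝ} {t : ℝ}

theorem hasDerivWithinAt_dotProduct [Fintype ι] {a b : ℝ → ι → ℝ} {a' b' : ι → ℝ}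
    (ha : ∀ i, HasDerivWithinAt (fun τ => a τ i) (a' i) s t)
    (hb : ∀ i, HasDerivWithinAt (fun τ => b τ i) (b' i) s t) :
    HasDerivWithinAt (fun τ => a τ ⬝ᵥ b τ) (a' ⬝ᵥ b t + a t ⬝ᵥ b') s t := by
  simpa only [dotProduct, ← Finset.sum_add_distrib] using
    HasDerivWithinAt.fun_sum fun i _ => (ha i).fun_mul (hb i)

theorem hasDerivWithinAt_mulVec_apply [Fintype κ] {P : ℝ → Matrix ι κ ℝ} {P' : Matrix ι κ ℝ}
    {b : ℝ → κ → ℝ} {b' : κ → ℝ}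
    (hP : ∀ i j, HasDerivWithinAt (fun τ => P τ i j) (P' i j) s t)
    (hb : ∀ j, HasDerivWithinAt (fun τ => b τ j) (b' j) s t) (i : ι) :
    HasDerivWithinAt (fun τ => (P τ *ᵥ b τ) i) ((P' *ᵥ b t + P t *ᵥ b') i) s t :=
  hasDerivWithinAt_dotProduct (hP i) hb

theorem hasDerivWithinAt_dotProduct_mulVec [Fintype ι] {P : ℝ → Matrix ι ι ℝ}
    {P' : Matrix ι ι ℝ} {x : ℝ → ι → ℝ} {x' : ι → ℝ}
    (hP : ∀ i j, HasDerivWithinAt (fun τ => P τ i j) (P' i j) s t)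
    (hx : ∀ i, HasDerivWithinAt (fun τ => x τ i) (x' i) s t) :
    HasDerivWithinAt (fun τ => x τ ⬝ᵥ P τ *ᵥ x τ)
      (x' ⬝ᵥ P t *ᵥ x t + x t ⬝ᵥ P' *ᵥ x t + x t ⬝ᵥ P t *ᵥ x') s t := by
  simpa only [dotProduct_add, add_assoc] using
    hasDerivWithinAt_dotProduct hx (hasDerivWithinAt_mulVec_apply hP hx)

end Derivative

theorem integral_eq_sub_of_hasDerivWithinAt_Icc {f f' : ℝ → ℝ} {a b : ℝ} (hab : a ≤ b)
    (hf : ∀ t ∈ Icc a b, HasDerivWithinAt f (f' t) (Icc a b) t)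
    (hf' : IntervalIntegrable f' volume a b) :
    ∫ t in a..b, f' t = f b - f a :=
  intervalIntegral.integral_eq_sub_of_hasDerivAt_of_le hab
    (fun t ht => (hf t ht).continuousWithinAt)
    (fun t ht => (hf t (Ioo_subset_Icc_self ht)).hasDerivAt (Icc_mem_nhds ht.1 ht.2)) hf'

section Algebra

variable {K ι κ ρ : Type*} [Field K] [Fintype ι] [Fintype κ] [Fintype ρ]

theorem dotProduct_transpose_mul_mulVec {P Q : Matrix κ ι K} (v w : ι → K) :
    v ⬝ᵥ (Pᵀ * Q) *ᵥ w = P *ᵥ v ⬝ᵥ Q *ᵥ w := by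
  rw [← mulVec_mulVec, dotProduct_transpose_mulVec, dotProduct_comm]

theorem quadForm_deriv_eq_sq_sub_cost_of_riccati {lam : K} (hlam : lam ≠ 0)
    {M A X Y : Matrix ι ι K} {B : Matrix ι κ K} {C : Matrix ρ ι K} (hX : Xᵀ = X)
    (hY : -Y = Cᵀ * C + Aᵀ * X * M + Mᵀ * X * A - (1 / lam) • (Mᵀ * X * B * Bᵀ * X * M))
    {v v' : ι → K} {w : κ → K} (hdyn : M *ᵥ v' = A *ᵥ v + B *ᵥ w) :
    v' ⬝ᵥ (Mᵀ * X * M) *ᵥ v + v ⬝ᵥ Y *ᵥ v + v ⬝ᵥ (Mᵀ * X * M) *ᵥ v'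
      = lam * ((w + (1 / lam) • (Bᵀ * X * M) *ᵥ v) ⬝ᵥ (w + (1 / lam) • (Bᵀ * X * M) *ᵥ v))
        - (C *ᵥ v ⬝ᵥ C *ᵥ v + lam * (w ⬝ᵥ w)) := by
  set p := X *ᵥ M *ᵥ v
  set z := Bᵀ *ᵥ p
  have hz : (Bᵀ * X * M) *ᵥ v = z := by simp only [z, p, mulVec_mulVec]
  have hsymm : (Mᵀ * X * M)ᵀ = Mᵀ * X * M := by
    simp only [transpose_mul, transpose_transpose, hX, Matrix.mul_assoc]
  have hcross : v' ⬝ᵥ (Mᵀ * X * M) *ᵥ v = A *ᵥ v ⬝ᵥ p + w ⬝ᵥ z := by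
    rw [Matrix.mul_assoc, dotProduct_transpose_mul_mulVec, hdyn, add_dotProduct, ← mulVec_mulVec,
      dotProduct_comm (B *ᵥ w), ← dotProduct_transpose_mulVec B w p]
  have hCC : v ⬝ᵥ (Cᵀ * C) *ᵥ v = C *ᵥ v ⬝ᵥ C *ᵥ v := dotProduct_transpose_mul_mulVec v v
  have hAXM : v ⬝ᵥ (Aᵀ * X * M) *ᵥ v = A *ᵥ v ⬝ᵥ p := by
    rw [Matrix.mul_assoc, dotProduct_transpose_mul_mulVec, ← mulVec_mulVec]
  have hMXA : v ⬝ᵥ (Mᵀ * X * A) *ᵥ v = A *ᵥ v ⬝ᵥ p := by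
    rw [← dotProduct_transpose_mulVec, ← hAXM]
    simp only [transpose_mul, transpose_transpose, hX, Matrix.mul_assoc]
  have hBB : v ⬝ᵥ (Mᵀ * X * B * Bᵀ * X * M) *ᵥ v = z ⬝ᵥ z := by
    have : Mᵀ * X * B * Bᵀ * X * M = (Bᵀ * X * M)ᵀ * (Bᵀ * X * M) := by
      simp only [transpose_mul, transpose_transpose, hX, Matrix.mul_assoc]
    rw [this, dotProduct_transpose_mul_mulVec, hz]
  have hquad : v ⬝ᵥ Y *ᵥ v = -(C *ᵥ v ⬝ᵥ C *ᵥ v) - 2 * (A *ᵥ v ⬝ᵥ p) + 1 / lam * (z ⬝ᵥ z) := by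
    rw [neg_eq_iff_eq_neg.mp hY]
    simp only [neg_mulVec, add_mulVec, sub_mulVec, smul_mulVec, dotProduct_neg, dotProduct_add,
      dotProduct_sub, dotProduct_smul, smul_eq_mul, hCC, hAXM, hMXA, hBB]
    ring
  rw [← dotProduct_transpose_mulVec (Mᵀ * X * M) v', hsymm, hcross, hquad, hz]
  simp only [dotProduct_add, add_dotProduct, dotProduct_smul, smul_dotProduct, smul_eq_mul,
    dotProduct_comm z w]
  field_simp
  ring

end Algebra

theorem completion_of_squares_general {n m r : ℕ} (T lam : ℝ) (hT : 0 < T) (hlam : 0 < lam)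
    (M A : ℝ → Matrix (Fin n) (Fin n) ℝ) (B : ℝ → Matrix (Fin n) (Fin m) ℝ)
    (C : ℝ → Matrix (Fin r) (Fin n) ℝ)
    (hM : MatContOn M (Icc 0 T))
    (hB : MatContOn B (Icc 0 T)) (hC : MatContOn C (Icc 0 T))
    (X : ℝ → Matrix (Fin n) (Fin n) ℝ) (hX : RiccatiSol T lam M A B C X)
    (x₀ : Fin n → ℝ) (u : ℝ → Fin m → ℝ) (x : ℝ → Fin n → ℝ)
    (hadm : Admissible T M A B x₀ u x) :
    cost lam T C u x =
      (1 / 2) * (x₀ ⬝ᵥ ((M 0)ᵀ * X 0 * M 0).mulVec x₀)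
        + (lam / 2) * ∫ t in (0:ℝ)..T,
            ((u t + (1 / lam) • ((B t)ᵀ * X t * M t).mulVec (x t)) ⬝ᵥ
              (u t + (1 / lam) • ((B t)ᵀ * X t * M t).mulVec (x t))) := by
  obtain ⟨x', hx', hdyn⟩ := hadm.dyn
  obtain ⟨Y, hY, hric⟩ := hX.riccati
  set running := fun t => C t *ᵥ x t ⬝ᵥ C t *ᵥ x t + lam * (u t ⬝ᵥ u t)
  set w := fun t => u t + (1 / lam) • ((B t)ᵀ * X t * M t) *ᵥ x t
  have hderiv : ∀ t ∈ Icc 0 T, HasDerivWithinAt (fun t => x t ⬝ᵥ ((M t)ᵀ * X t * M t) *ᵥ x t)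
      (lam * (w t ⬝ᵥ w t) - running t) (Icc 0 T) t := fun t ht => by
    rw [← quadForm_deriv_eq_sq_sub_cost_of_riccati hlam.ne' (hX.symm t ht) (hric t ht)
      (hdyn t ht)]
    exact hasDerivWithinAt_dotProduct_mulVec (hY t ht) (hx' t ht)
  have hx : Continuous fun t : Icc 0 T => x t :=
    continuous_subtype_of_forall_continuousOn fun i t ht => (hx' t ht i).continuousWithinAt
  have hu := continuous_subtype_of_forall_continuousOn hadm.u_cont
  have hCx := hC.continuous_subtype.matrix_mulVec hx
  have hBXM : Continuous fun t : Icc 0 T => (B t)ᵀ * X t * M t :=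
    (hB.continuous_subtype.matrix_transpose.matrix_mul hX.cont.continuous_subtype).matrix_mul
      hM.continuous_subtype
  have hw : Continuous fun t : Icc 0 T => w t :=
    hu.add ((hBXM.matrix_mulVec hx).const_smul (1 / lam))
  have hrun := intervalIntegrable_of_continuous_subtype (f := running) hT.le
    ((hCx.dotProduct hCx).add (continuous_const.mul (hu.dotProduct hu)))
  have hsq := intervalIntegrable_of_continuous_subtype (f := fun t => w t ⬝ᵥ w t) hT.le
    (hw.dotProduct hw)
  have hftc := integral_eq_sub_of_hasDerivWithinAt_Icc hT.le hderiv ((hsq.const_mul lam).sub hrun)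
  rw [intervalIntegral.integral_sub (hsq.const_mul lam) hrun, intervalIntegral.integral_const_mul,
    hX.terminal, hadm.init] at hftc
  simp only [Matrix.zero_mul, Matrix.mul_zero, zero_mulVec, dotProduct_zero] at hftc
  unfold cost
  linarith

/-- Completion-of-squares identity: for every Riccati solution `X` and every admissible
pair `(u, x)` with initial state `x₀`,
`J(u,x) = (1/2) x₀ᵀ M(0)ᵀ X(0) M(0) x₀ + (λ/2) ∫₀ᵀ ‖u(t) + (1/λ) B̂(t)ᵀ X(t) M(t) x(t)‖² dt`. -/
theorem completion_of_squares {n m r : ℕ} (T lam : ℝ) (hT : 0 < T) (hlam : 0 < lam)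
    (M A : ℝ → Matrix (Fin n) (Fin n) ℝ) (B : ℝ → Matrix (Fin n) (Fin m) ℝ)
    (C : ℝ → Matrix (Fin r) (Fin n) ℝ)
    (hM : MatContOn M (Icc 0 T)) (hA : MatContOn A (Icc 0 T))
    (hB : MatContOn B (Icc 0 T)) (hC : MatContOn C (Icc 0 T))
    (X : ℝ → Matrix (Fin n) (Fin n) ℝ) (hX : RiccatiSol T lam M A B C X)
    (x₀ : Fin n → ℝ) (u : ℝ → Fin m → ℝ) (x : ℝ → Fin n → ℝ)
    (hadm : Admissible T M A B x₀ u x) :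
    cost lam T C u x =
      (1 / 2) * (x₀ ⬝ᵥ ((M 0)ᵀ * X 0 * M 0).mulVec x₀)
        + (lam / 2) * ∫ t in (0:ℝ)..T,
            ((u t + (1 / lam) • ((B t)ᵀ * X t * M t).mulVec (x t)) ⬝ᵥ
              (u t + (1 / lam) • ((B t)ᵀ * X t * M t).mulVec (x t))) :=
  completion_of_squares_general T lam hT hlam M A B C hM hB hC X hX x₀ u x hadm
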